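/- Let v, w : Fin n → ℝ and p ∈ [1, ∞). Then ‖sort(v) − sort(w)‖_p ≤ ‖v − w‖_p, where sort denotes the monotone non-increasing rearrangement. In other words, sorting both vectors minimizes the ℓ_p distance over all matchings: ‖sort(v) − sort(w)‖_p = min over permutations σ of ‖v − w∘σ‖_p. -/

import Mathlib

open Real Finset

/-- Projection of a point of `ℝ²` onto the direction `θ`. -/
noncomputable def proj (θ : ℝ) (p : ℝ × ℝ) : ℝ := p.1 * Real.cos θ + p.2 * Real.sin θ

/-- Monotone non-increasing rearrangement of a vector. -/
noncomputable def sortd {n : ℕ} (v : Fin n → ℝ) : Fin n → ℝ :=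
  fun i => v (Tuple.sort v (Fin.rev i))

/-- The `ℓ_p` norm of a vector, for `p ∈ [1,∞)`. -/
noncomputable def lpNorm {n : ℕ} (p : ℝ) (u : Fin n → ℝ) : ℝ :=
  (∑ i, |u i| ^ p) ^ (1 / p)

/-- The `ℓ_∞` norm of a vector. -/
noncomputable def linfNorm {n : ℕ} (u : Fin n → ℝ) : ℝ := ⨆ i, |u i|

/-- The 1-dimensional sorted `p`-Wasserstein distance. -/
noncomputable def Wp {n : ℕ} (p : ℝ) (v w : Fin n → ℝ) : ℝ :=
  lpNorm p (sortd v - sortd w)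

/-- The 1-dimensional sorted `∞`-Wasserstein distance. -/
noncomputable def Winf {n : ℕ} (v w : Fin n → ℝ) : ℝ :=
  linfNorm (sortd v - sortd w)

/-- Euclidean norm on `ℝ²`. -/
noncomputable def enorm2 (p : ℝ × ℝ) : ℝ := Real.sqrt (p.1 ^ 2 + p.2 ^ 2)

/-!
The cost `c x y = |x - y| ^ p` satisfies the Monge condition
`c X Y + c x y ≤ c X y + c x Y` for `x ≤ X`, `y ≤ Y`: the four arguments have equal sums in pairs
and `x - Y ≤ X - Y, x - y ≤ X - y`, so this is convexity of `|·| ^ p`. Hence uncrossing two pairs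
of a matching never increases its cost. Starting from any permutation matching two sorted
vectors, sending the largest displaced index to its place is such an uncrossing and shrinks the
support, so the identity matching is optimal.
-/

open Equiv

def IsMonge {α β γ : Type*} [LE α] [LE β] [Add γ] [LE γ] (c : α → β → γ) : Prop :=
  ∀ ⦃x X y Y⦄, x ≤ X → y ≤ Y → c X Y + c x y ≤ c X y + c x Y

section Convex

variable {𝕜 : Type*} [Field 𝕜] [LinearOrder 𝕜] [IsStrictOrderedRing 𝕜] {s : Set 𝕜} {f : 𝕜 → 𝕜}

theorem ConvexOn.map_add_map_le_of_add_eq (hf : ConvexOn 𝕜 s f) {x y z w : 𝕜} (hx : x ∈ s)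
    (hw : w ∈ s) (hxy : x ≤ y) (hyw : y ≤ w) (hyz : y + z = x + w) :
    f y + f z ≤ f x + f w := by
  obtain rfl : z = x + w - y := by linear_combination hyz
  rcases hxy.eq_or_lt with rfl | hxy
  · simp
  have hxw : w - x ≠ 0 := by linarith
  have ha : 0 ≤ (w - y) / (w - x) := div_nonneg (by linarith) (by linarith)
  have hb : 0 ≤ (y - x) / (w - x) := div_nonneg (by linarith) (by linarith)
  have hab : (w - y) / (w - x) + (y - x) / (w - x) = 1 := by field_simp; ring
  have h₁ := hf.2 hx hw ha hb hab
  have h₂ := hf.2 hx hw hb ha (by rw [add_comm, hab])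
  have hy : ((w - y) / (w - x)) • x + ((y - x) / (w - x)) • w = y := by
    simp only [smul_eq_mul]; field_simp; ring
  have hz : ((y - x) / (w - x)) • x + ((w - y) / (w - x)) • w = x + w - y := by
    simp only [smul_eq_mul]; field_simp; ring
  rw [hy] at h₁
  rw [hz] at h₂
  simp only [smul_eq_mul] at h₁ h₂
  linear_combination h₁ + h₂ + (f x + f w) * hab

theorem ConvexOn.isMonge_sub (hf : ConvexOn 𝕜 Set.univ f) : IsMonge fun x y => f (x - y) := by
  intro x X y Y hx hy
  exact (hf.map_add_map_le_of_add_eq trivial trivial (by linarith) (by linarith) (by ring)).trans_eq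
    (add_comm _ _)

end Convex

theorem convexOn_abs_rpow {p : ℝ} (hp : 1 ≤ p) : ConvexOn ℝ Set.univ fun t : ℝ => |t| ^ p := by
  have himage : (norm : ℝ → ℝ) '' Set.univ = Set.Ici 0 := Set.image_univ.trans (range_norm ℝ)
  have hmono : MonotoneOn (fun t : ℝ => t ^ p) (Set.Ici 0) := fun x hx y _ hxy =>
    Real.rpow_le_rpow hx hxy (by linarith)
  exact (himage ▸ convexOn_rpow hp).comp convexOn_univ_norm (himage ▸ hmono)

theorem Fintype.sum_le_sum_of_eq_off_pair {ι γ : Type*} [Fintype ι] [DecidableEq ι]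
    [AddCommMonoid γ] [PartialOrder γ] [IsOrderedAddMonoid γ] {u v : ι → γ} {a b : ι}
    (hab : a ≠ b) (huv : ∀ i, i ≠ a → i ≠ b → u i = v i) (hle : u a + u b ≤ v a + v b) :
    ∑ i, u i ≤ ∑ i, v i := by
  rw [← Finset.sum_sdiff (subset_univ {a, b}), ← Finset.sum_sdiff (subset_univ {a, b}),
    sum_pair hab, sum_pair hab]
  refine add_le_add (Finset.sum_congr rfl fun i hi => ?_).le hle
  simp only [mem_sdiff, mem_univ, mem_insert, mem_singleton, true_and, not_or] at hi
  exact huv i hi.1 hi.2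

theorem IsMonge.sum_le_sum_comp_perm {ι α β γ : Type*} [LinearOrder ι] [Fintype ι] [Preorder α]
    [Preorder β] [AddCommMonoid γ] [PartialOrder γ] [IsOrderedAddMonoid γ] {c : α → β → γ}
    (hc : IsMonge c) {f : ι → α} {g : ι → β} (hf : Monotone f) (hg : Monotone g)
    (σ : Perm ι) : ∑ i, c (f i) (g i) ≤ ∑ i, c (f i) (g (σ i)) := by
  induction hσ : #σ.support using Nat.strong_induction_on generalizing σ with
  | _ k ih =>
  subst hσ
  rcases σ.support.eq_empty_or_nonempty with hempty | hne
  · simp [Perm.support_eq_empty_iff.mp hempty]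
  set a := σ.support.max' hne
  have ha : σ a ≠ a := Perm.mem_support.mp (σ.support.max'_mem hne)
  set j := σ.symm a
  have hja : j ≠ a := fun h => ha (by rw [← h, apply_symm_apply, h])
  have hj : j ≤ a := σ.support.le_max' j (Perm.mem_support.mpr (by simpa [j] using hja.symm))
  have hσa : σ a ≤ a := σ.support.le_max' _ (Perm.mem_support.mpr (σ.injective.ne ha))
  -- `swap a (σ a) * σ` fixes `a` and agrees with `σ` off `{a, j}`: it uncrosses two pairs.
  calc ∑ i, c (f i) (g i) ≤ ∑ i, c (f i) (g ((swap a (σ a) * σ) i)) :=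
        ih _ (Perm.card_support_swap_mul ha) _ rfl
    _ ≤ ∑ i, c (f i) (g (σ i)) := by
        refine Fintype.sum_le_sum_of_eq_off_pair hja.symm (fun i hia hij => ?_) ?_
        · rw [Perm.mul_apply, swap_apply_of_ne_of_ne (fun h => hij (σ.eq_symm_apply.mpr h))
            (σ.injective.ne hia)]
        · simpa [j] using hc (hf hj) (hg hσa)

theorem IsMonge.sum_sortd_le {γ : Type*} [AddCommMonoid γ] [PartialOrder γ] [IsOrderedAddMonoid γ]
    {c : ℝ → ℝ → γ} (hc : IsMonge c) {n : ℕ} (v w : Fin n → ℝ) (σ : Perm (Fin n)) :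
    ∑ i, c (sortd v i) (sortd w i) ≤ ∑ i, c (v i) (w (σ i)) := by
  let ρ : Perm (Fin n) := (Tuple.sort v).trans (σ.trans (Tuple.sort w).symm)
  calc ∑ i, c (sortd v i) (sortd w i) = ∑ i, c (v (Tuple.sort v i)) (w (Tuple.sort w i)) :=
        Fintype.sum_equiv Fin.revPerm _ _ fun i => rfl
    _ ≤ ∑ i, c (v (Tuple.sort v i)) (w (Tuple.sort w (ρ i))) :=
        hc.sum_le_sum_comp_perm (Tuple.monotone_sort v) (Tuple.monotone_sort w) ρ
    _ = ∑ i, c (v i) (w (σ i)) := by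
        simpa [ρ] using Equiv.sum_comp (Tuple.sort v) fun i => c (v i) (w (σ i))

theorem lpNorm_comp_perm {n : ℕ} (p : ℝ) (u : Fin n → ℝ) (τ : Perm (Fin n)) :
    lpNorm p (u ∘ τ) = lpNorm p u := by
  unfold lpNorm
  exact congrArg (· ^ (1 / p)) (Equiv.sum_comp τ fun i => |u i| ^ p)

theorem lpNorm_sortd_sub_le {n : ℕ} {p : ℝ} (hp : 1 ≤ p) (v w : Fin n → ℝ) (σ : Perm (Fin n)) :
    lpNorm p (sortd v - sortd w) ≤ lpNorm p (v - w ∘ σ) :=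
  Real.rpow_le_rpow (by positivity) ((convexOn_abs_rpow hp).isMonge_sub.sum_sortd_le v w σ)
    (one_div_nonneg.mpr (by linarith))

theorem exists_perm_lpNorm_sortd_sub_eq {n : ℕ} (p : ℝ) (v w : Fin n → ℝ) :
    ∃ σ : Perm (Fin n), lpNorm p (v - w ∘ σ) = lpNorm p (sortd v - sortd w) := by
  let τv : Perm (Fin n) := Fin.revPerm.trans (Tuple.sort v)
  let τw : Perm (Fin n) := Fin.revPerm.trans (Tuple.sort w)
  refine ⟨τv.symm.trans τw, ?_⟩
  rw [← lpNorm_comp_perm p _ τv]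
  congr 1
  ext i
  simp [τv, τw, sortd]

theorem stmt_7 {n : ℕ} (p : ℝ) (hp : 1 ≤ p) (v w : Fin n → ℝ) :
    lpNorm p (sortd v - sortd w) ≤ lpNorm p (v - w) ∧
    IsLeast {x : ℝ | ∃ σ : Equiv.Perm (Fin n), x = lpNorm p (v - w ∘ σ)}
      (lpNorm p (sortd v - sortd w)) := by
  obtain ⟨σ₀, hσ₀⟩ := exists_perm_lpNorm_sortd_sub_eq p v w
  refine ⟨by simpa using lpNorm_sortd_sub_le hp v w 1, ⟨σ₀, hσ₀.symm⟩, ?_⟩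
  rintro _ ⟨σ, rfl⟩
  exact lpNorm_sortd_sub_le hp v w σ
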